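/- Let X be a topological space and 𝒞 a set of closed subsets of X equipped with the Thurston topology. Let f : 𝒞 → 𝒞 be a homeomorphism with respect to the Thurston topology. Then f is monotone for inclusion: for all A, B ∈ 𝒞, A ⊆ B implies f(A) ⊆ f(B). -/

import Mathlib

/-!
In the Thurston topology `B ⤳ A` (that is, `A` lies in the closure of `{B}`) exactly when every
open set meeting `A` meets `B`. For `B` closed, testing this with the open set `Bᶜ` shows that this happens exactly when
`A ⊆ B`. So on a family of closed sets inclusion is the specialization order of the Thurston
topology, which every continuous map preserves.
-/

open Topology

/-- The Thurston topology on a set `𝒞` of subsets of a topological space `X`: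
the topology generated by the subbasis consisting of the sets
`U_V = {A ∈ 𝒞 : A ∩ V ≠ ∅}` for `V` open in `X`. -/
def thurstonTop {X : Type*} [TopologicalSpace X] (𝒞 : Set (Set X)) :
    TopologicalSpace 𝒞 :=
  TopologicalSpace.generateFrom
    {U | ∃ V : Set X, IsOpen V ∧ U = {A : 𝒞 | ((A : Set X) ∩ V).Nonempty}}

theorem TopologicalSpace.specializes_generateFrom_iff {α : Type*} {g : Set (Set α)} {x y : α} :
    @Specializes α (generateFrom g) x y ↔ ∀ s ∈ g, y ∈ s → x ∈ s := by
  let := generateFrom g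
  refine ⟨fun h s hs hy => h.mem_open (isOpen_generateFrom_of_mem hs) hy, fun h => ?_⟩
  rw [Specializes, nhds_generateFrom (a := y)]
  exact le_iInf₂ fun s ⟨hy, hs⟩ => nhds_le_of_le (h s hs hy) (isOpen_generateFrom_of_mem hs) le_rfl

section ThurstonTopology

variable {X : Type*} [TopologicalSpace X] {𝒞 : Set (Set X)}

attribute [local instance] thurstonTop

theorem thurstonTop_specializes_iff {A B : 𝒞} :
    B ⤳ A ↔ ∀ V : Set X, IsOpen V → ((A : Set X) ∩ V).Nonempty → ((B : Set X) ∩ V).Nonempty := by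
  refine TopologicalSpace.specializes_generateFrom_iff.trans ⟨fun h V hV => h _ ⟨V, hV, rfl⟩, ?_⟩
  rintro h _ ⟨V, hV, rfl⟩
  exact h V hV

theorem thurstonTop_specializes_of_subset {A B : 𝒞} (h : (A : Set X) ⊆ B) : B ⤳ A :=
  thurstonTop_specializes_iff.2 fun _ _ => Set.Nonempty.mono (Set.inter_subset_inter_left _ h)

theorem subset_of_thurstonTop_specializes {A B : 𝒞} (hB : IsClosed (B : Set X)) (h : B ⤳ A) :
    (A : Set X) ⊆ B := by
  by_contra hAB
  obtain ⟨x, hxA, hxB⟩ := Set.not_subset.1 hAB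
  obtain ⟨y, hyB, hyB'⟩ := thurstonTop_specializes_iff.1 h _ hB.isOpen_compl ⟨x, hxA, hxB⟩
  exact hyB' hyB

theorem thurstonTop_monotone_of_continuous {𝒟 : Set (Set X)} (hcl : ∀ C ∈ 𝒟, IsClosed C)
    {f : 𝒞 → 𝒟} (hf : Continuous f) {A B : 𝒞} (h : (A : Set X) ⊆ B) :
    (f A : Set X) ⊆ f B :=
  subset_of_thurstonTop_specializes (hcl _ (f B).2) ((thurstonTop_specializes_of_subset h).map hf)

end ThurstonTopology

/-- A homeomorphism of a set `𝒞` of closed subsets of `X` with respect to the Thurston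
topology is monotone for inclusion: `A ⊆ B` implies `f(A) ⊆ f(B)`. -/
theorem homeomorph_monotone {X : Type*} [TopologicalSpace X]
    (𝒞 : Set (Set X)) (hcl : ∀ C ∈ 𝒞, IsClosed C)
    (f : @Homeomorph 𝒞 𝒞 (thurstonTop 𝒞) (thurstonTop 𝒞)) :
    ∀ A B : 𝒞, (A : Set X) ⊆ (B : Set X) → (f A : Set X) ⊆ (f B : Set X) :=
  let := thurstonTop 𝒞
  fun _ _ => thurstonTop_monotone_of_continuous hcl f.continuous
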